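/- arXiv:1601.01086 — 2 statements merged into one kernel-verified Lean document; each statement's English description precedes it below -/
import Mathlib

section
/- Let $G_1$ be a finite simple graph on vertex set $\{1,\ldots,n\}$ and $G_2$ a finite simple graph on vertex set $\{n+1,\ldots,n+m\}$, and assume that $n$ is a free vertex of $G_1$ and $n+m$ is a free vertex of $G_2$. Let $G' = G_1 \cup G_2$ be their disjoint union and $S' = K[x_1,\ldots,x_{n+m},y_1,\ldots,y_{n+m}]$. Then $x_n - x_{n+m}$ does not belong to any minimal prime of $J_{G'}$; in particular, $x_n - x_{n+m}$ is a nonzerodivisor on $S'/J_{G'}$. -/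
/-!
`J_G` is the kernel of the map from `K[x, y]` to the algebra of the monoid `ℕ^(V ⊕ V)/∼`, where
`∼` is generated by the moves `x_i y_j ∼ x_j y_i` along the edges `{i, j}`. If `v` is free, the
class of `x_v` is cancellable in this monoid. When all vertices are free this holds because the
degrees at the vertices together with the `x`-degrees of the connected components form a complete
invariant of `∼`; otherwise one inducts, as in Ohtani's decomposition of `J_G`, over the graphs
obtained by completing, resp. deleting, the neighbourhood of a non-free vertex. Since `J_G` is
homogeneous for the grading by the degree at `v`, in which `x_v - x_w` has leading form `x_v`,
multiplication by `x_v - x_w` is then injective modulo `J_G`, and an element with this property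
lies in no minimal prime of `J_G`.
-/

open MvPolynomial

/-- The binomial edge ideal of a simple graph `G` on vertex set `V`, inside the
polynomial ring `K[x_v, y_v : v ∈ V]`, realized as `MvPolynomial (V ⊕ V) K` where
`X (Sum.inl v)` plays the role of `x_v` and `X (Sum.inr v)` the role of `y_v`. -/
noncomputable def binomialEdgeIdeal {V : Type*} (K : Type*) [CommRing K]
    (G : SimpleGraph V) : Ideal (MvPolynomial (V ⊕ V) K) :=
  Ideal.span {f | ∃ i j, G.Adj i j ∧
    f = X (Sum.inl i) * X (Sum.inr j) - X (Sum.inl j) * X (Sum.inr i)}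

def SimpleGraph.IsFreeVertex {V : Type*} (G : SimpleGraph V) (v : V) : Prop :=
  ∀ u w, G.Adj v u → G.Adj v w → u ≠ w → G.Adj u w

namespace SimpleGraph

variable {V : Type*} {G : SimpleGraph V}

theorem Reachable.eq_or_adj_of_forall_isFreeVertex (hfree : ∀ v, G.IsFreeVertex v) {i j : V}
    (h : G.Reachable i j) : i = j ∨ G.Adj i j := by
  obtain ⟨p⟩ := h
  induction p with
  | nil => exact .inl rfl
  | @cons u v w huv _ ih =>
    rcases ih with rfl | hvw
    · exact .inr huv
    by_cases huw : u = w
    · exact .inl huw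
    · exact .inr (hfree v u w huv.symm hvw huw)

def completeNeighbors (G : SimpleGraph V) (v : V) : SimpleGraph V where
  Adj a b := G.Adj a b ∨ (a ≠ b ∧ G.Adj v a ∧ G.Adj v b)
  symm := ⟨fun a b => by
    rintro (h | ⟨hab, ha, hb⟩)
    exacts [Or.inl h.symm, Or.inr ⟨hab.symm, hb, ha⟩]⟩
  loopless := ⟨fun a => by rintro (h | ⟨h, -⟩); exacts [G.loopless.irrefl a h, h rfl]⟩

theorem le_completeNeighbors (G : SimpleGraph V) (v : V) : G ≤ G.completeNeighbors v :=
  fun _ _ => Or.inl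

theorem completeNeighbors_adj_of_ne {v a b : V} (hab : a ≠ b) (ha : a = v ∨ G.Adj v a)
    (hb : b = v ∨ G.Adj v b) : (G.completeNeighbors v).Adj a b := by
  rcases ha with rfl | ha
  · exact Or.inl (hb.resolve_left hab.symm)
  rcases hb with rfl | hb
  · exact Or.inl ha.symm
  exact Or.inr ⟨hab, ha, hb⟩

theorem support_completeNeighbors (G : SimpleGraph V) (v : V) :
    (G.completeNeighbors v).support = G.support := by
  refine le_antisymm ?_ (support_mono (G.le_completeNeighbors v))
  rintro a ⟨b, hab | ⟨-, ha, -⟩⟩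
  exacts [⟨b, hab⟩, ⟨v, ha.symm⟩]

theorem lt_completeNeighbors {v : V} (hv : ¬ G.IsFreeVertex v) : G < G.completeNeighbors v := by
  simp only [IsFreeVertex, not_forall] at hv
  obtain ⟨a, b, ha, hb, hab, hnadj⟩ := hv
  exact lt_of_le_not_ge (G.le_completeNeighbors v) fun hle => hnadj (hle (Or.inr ⟨hab, ha, hb⟩))

theorem mem_support_of_not_isFreeVertex {v : V} (hv : ¬ G.IsFreeVertex v) : v ∈ G.support := by
  simp only [IsFreeVertex, not_forall] at hv
  obtain ⟨a, -, ha, -⟩ := hv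
  exact ⟨a, ha⟩

theorem support_deleteIncidenceSet_ssubset {v : V} (hv : v ∈ G.support) :
    (G.deleteIncidenceSet v).support ⊂ G.support := by
  refine ssubset_of_subset_of_ne (support_mono (G.deleteIncidenceSet_le v)) fun h => ?_
  obtain ⟨w, hw⟩ := h ▸ hv
  exact (deleteIncidenceSet_adj.1 hw).2.1 rfl

theorem IsFreeVertex.deleteIncidenceSet {v₀ : V} (h : G.IsFreeVertex v₀) (v : V) :
    (G.deleteIncidenceSet v).IsFreeVertex v₀ := by
  simp only [IsFreeVertex, deleteIncidenceSet_adj] at h ⊢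
  rintro u w ⟨hu, -, huv⟩ ⟨hw, -, hwv⟩ huw
  exact ⟨h u w hu hw huw, huv, hwv⟩

theorem IsFreeVertex.completeNeighbors {v₀ : V} (h : G.IsFreeVertex v₀) (v : V) :
    (G.completeNeighbors v).IsFreeVertex v₀ := by
  intro u w hu hw huw
  by_cases hv₀v : G.Adj v₀ v
  · have hnbr : ∀ x, (G.completeNeighbors v).Adj v₀ x → x = v ∨ G.Adj v x := by
      rintro x (hx | ⟨-, -, hx⟩)
      · by_cases hxv : x = v
        exacts [Or.inl hxv, Or.inr (h v x hv₀v hx (Ne.symm hxv))]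
      · exact Or.inr hx
    exact completeNeighbors_adj_of_ne huw (hnbr u hu) (hnbr w hw)
  · have hold : ∀ x, (G.completeNeighbors v).Adj v₀ x → G.Adj v₀ x := by
      rintro x (hx | ⟨-, hvv₀, -⟩)
      exacts [hx, absurd hvv₀.symm hv₀v]
    exact Or.inl (h u w (hold u hu) (hold w hw) huw)

theorem IsFreeVertex.sum_inl {W : Type*} {H : SimpleGraph W} {v : V} (h : G.IsFreeVertex v) :
    (G.sum H).IsFreeVertex (Sum.inl v) := by
  rintro (u | u) (w | w) hu hw huw <;> simp_all [IsFreeVertex]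

end SimpleGraph

theorem Finsupp.exists_eq_add_single_one {ι : Type*} {γ : ι →₀ ℕ} {w : ι} (h : γ w ≠ 0) :
    ∃ γ₀, γ = γ₀ + single w 1 :=
  ⟨γ - single w 1, (tsub_add_cancel_of_le (single_le_iff.2 (Nat.one_le_iff_ne_zero.2 h))).symm⟩

theorem AddCon.mk'_eq_mk'_iff {M : Type*} [AddMonoid M] (c : AddCon M) {a b : M} :
    c.mk' a = c.mk' b ↔ c a b :=
  c.eq

namespace AddMonoidAlgebra

theorem mem_of_mapDomain_mk'_eq_zero {R M : Type*} [CommRing R] [AddCommMonoid M] (c : AddCon M)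
    {I : Ideal (AddMonoidAlgebra R M)} (hI : ∀ a b, c a b → single a 1 - single b 1 ∈ I)
    {p : AddMonoidAlgebra R M} (hp : mapDomain c.mk' p = 0) : p ∈ I := by
  set s := Function.surjInv c.mk'_surjective
  have hs : ∀ a, c a (s (c.mk' a)) := fun a =>
    c.mk'_eq_mk'_iff.1 (Function.surjInv_eq c.mk'_surjective (c.mk' a)).symm
  have key : ∀ q : AddMonoidAlgebra R M, q - mapDomain s (mapDomain c.mk' q) ∈ I := by
    intro q
    induction q using AddMonoidAlgebra.induction_linear with
    | zero => simp [mapDomain_zero]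
    | add q q' hq hq' =>
      rw [mapDomain_add, mapDomain_add]
      convert add_mem hq hq' using 1
      abel
    | single a r =>
      rw [mapDomain_single, mapDomain_single]
      convert I.mul_mem_left (single 0 r) (hI _ _ (hs a)) using 1
      simp [mul_sub, single_mul_single]
  simpa only [hp, mapDomain_zero, sub_zero] using key p

theorem eq_zero_of_single_mul_eq_single_mul {k Q : Type*} [Semiring k] [AddCommMonoid Q]
    {a b : Q} (ha : IsAddLeftRegular a) (W : Q →+ ℕ) (hW : W b < W a)
    {F : AddMonoidAlgebra k Q} (h : single a 1 * F = single b 1 * F) : F = 0 := by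
  by_contra hF
  obtain ⟨q, hq, hmax⟩ := Finset.exists_max_image F.coeff.support W
    (Finsupp.support_nonempty_iff.2 (mt AddMonoidAlgebra.coeff_eq_zero.1 hF))
  have hL : (single a 1 * F).coeff (a + q) = F.coeff q := by
    rw [coeff_single_mul_eq_mul_coeff q (fun _ _ => ha.eq_iff), one_mul]
  have hR : (single b 1 * F).coeff (a + q) = 0 := by
    rw [coeff_single_mul_eq_mul_coeff (a + q), one_mul]
    · exact Finsupp.notMem_support_iff.1 fun hm => by have := hmax _ hm; simp at this; omega
    · intro m hm
      have := hmax m hm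
      constructor <;> intro he <;> have := congrArg W he <;> simp at this <;> omega
  exact (Finsupp.mem_support_iff.1 hq) (hL.symm.trans (h ▸ hR))

end AddMonoidAlgebra

namespace BinomialEdgeIdeal

open Finsupp Relation SimpleGraph

variable {V : Type*} {G H : SimpleGraph V}

noncomputable abbrev expX (i : V) : (V ⊕ V) →₀ ℕ := single (Sum.inl i) 1

noncomputable abbrev expY (i : V) : (V ⊕ V) →₀ ℕ := single (Sum.inr i) 1

def Step (G : SimpleGraph V) (γ δ : (V ⊕ V) →₀ ℕ) : Prop :=
  ∃ i j γ₀, G.Adj i j ∧ γ = γ₀ + expX i + expY j ∧ δ = γ₀ + expX j + expY i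

theorem Step.symm {γ δ : (V ⊕ V) →₀ ℕ} (h : Step G γ δ) : Step G δ γ := by
  obtain ⟨i, j, γ₀, hij, rfl, rfl⟩ := h
  exact ⟨j, i, γ₀, hij.symm, rfl, rfl⟩

theorem Step.add_right {γ δ : (V ⊕ V) →₀ ℕ} (h : Step G γ δ) (τ : (V ⊕ V) →₀ ℕ) :
    Step G (γ + τ) (δ + τ) := by
  obtain ⟨i, j, γ₀, hij, rfl, rfl⟩ := h
  exact ⟨i, j, γ₀ + τ, hij, by abel, by abel⟩

theorem Step.mono (hGH : G ≤ H) {γ δ : (V ⊕ V) →₀ ℕ} (h : Step G γ δ) : Step H γ δ := by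
  obtain ⟨i, j, γ₀, hij, rfl, rfl⟩ := h
  exact ⟨i, j, γ₀, hGH hij, rfl, rfl⟩

instance : Std.Symm (Step G) := ⟨fun _ _ => Step.symm⟩

def edgeCon (G : SimpleGraph V) : AddCon ((V ⊕ V) →₀ ℕ) where
  r := ReflTransGen (Step G)
  iseqv := ⟨fun _ => .refl, fun h => Std.Symm.symm _ _ h, fun h h' => h.trans h'⟩
  add' {_ b c _} h h' :=
    (h.lift (· + c) fun _ _ hs => hs.add_right c).trans
      (h'.lift (b + ·) fun x y hs => by simpa only [add_comm b] using hs.add_right b)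

theorem edgeCon_of_step {γ δ : (V ⊕ V) →₀ ℕ} (h : Step G γ δ) : edgeCon G γ δ :=
  ReflTransGen.single h

theorem edgeCon_mono (hGH : G ≤ H) : edgeCon G ≤ edgeCon H :=
  fun _ _ h => ReflTransGen.mono (fun _ _ => Step.mono hGH) _ _ h

theorem edgeCon_le_ker {P : Type*} [AddCommMonoid P] (f : ((V ⊕ V) →₀ ℕ) →+ P)
    (hf : ∀ i j, G.Adj i j → f (expX i) + f (expY j) = f (expX j) + f (expY i)) :
    edgeCon G ≤ AddCon.ker f := by
  intro γ δ h
  induction h with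
  | refl => rfl
  | tail _ hs ih =>
    obtain ⟨i, j, γ₀, hij, rfl, rfl⟩ := hs
    refine (AddCon.ker_rel f).2 (((AddCon.ker_rel f).1 ih).trans ?_)
    simp only [map_add, add_assoc, hf i j hij]

theorem edgeCon_of_reflTransGen {r : ((V ⊕ V) →₀ ℕ) → ((V ⊕ V) →₀ ℕ) → Prop}
    (P : ((V ⊕ V) →₀ ℕ) → Prop) (hP : ∀ γ δ, r γ δ → P γ → P δ)
    (hr : ∀ γ δ, r γ δ → P γ → edgeCon H γ δ) {γ δ : (V ⊕ V) →₀ ℕ}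
    (h : ReflTransGen r γ δ) (hγ : P γ) : edgeCon H γ δ := by
  suffices P δ ∧ edgeCon H γ δ from this.2
  induction h with
  | refl => exact ⟨hγ, (edgeCon H).refl _⟩
  | tail _ hs ih => exact ⟨hP _ _ hs ih.1, (edgeCon H).trans ih.2 (hr _ _ hs ih.1)⟩

def vertexDeg : ((V ⊕ V) →₀ ℕ) →+ (V → ℕ) where
  toFun γ i := γ (Sum.inl i) + γ (Sum.inr i)
  map_zero' := rfl
  map_add' γ δ := by ext i; simp only [Finsupp.coe_add, Pi.add_apply]; ring

@[simp]
theorem vertexDeg_apply (γ : (V ⊕ V) →₀ ℕ) (i : V) :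
    vertexDeg γ i = γ (Sum.inl i) + γ (Sum.inr i) := rfl

theorem vertexDeg_add_expX_add_expY_apply [DecidableEq V] (γ₀ : (V ⊕ V) →₀ ℕ) (i j v : V) :
    vertexDeg (γ₀ + expX i + expY j) v =
      vertexDeg γ₀ v + (if i = v then 1 else 0) + (if j = v then 1 else 0) := by
  simp only [vertexDeg_apply, Finsupp.coe_add, Pi.add_apply, single_apply, Sum.inl.injEq,
    Sum.inr.injEq, reduceCtorEq, if_false]
  omega

theorem vertexDeg_eq_of_edgeCon {γ δ : (V ⊕ V) →₀ ℕ} (h : edgeCon G γ δ) :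
    vertexDeg γ = vertexDeg δ := by
  classical
  refine (AddCon.ker_rel _).1 (edgeCon_le_ker vertexDeg (fun i j _ => ?_) h)
  ext k
  simp only [Pi.add_apply, vertexDeg_apply, single_apply, Sum.inl.injEq, Sum.inr.injEq,
    reduceCtorEq, if_false]
  omega

section CompleteInvariant

variable [Fintype V]

open scoped Classical in
noncomputable def xComponentDeg (G : SimpleGraph V) :
    ((V ⊕ V) →₀ ℕ) →+ (G.ConnectedComponent → ℕ) where
  toFun γ c := ∑ j with G.connectedComponentMk j = c, γ (Sum.inl j)
  map_zero' := by ext; simp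
  map_add' γ δ := by ext; simp [Finset.sum_add_distrib]

open scoped Classical in
theorem xComponentDeg_apply (γ : (V ⊕ V) →₀ ℕ) (c : G.ConnectedComponent) :
    xComponentDeg G γ c = ∑ j with G.connectedComponentMk j = c, γ (Sum.inl j) := rfl

theorem xComponentDeg_eq_of_edgeCon {γ δ : (V ⊕ V) →₀ ℕ} (h : edgeCon G γ δ) :
    xComponentDeg G γ = xComponentDeg G δ := by
  classical
  refine (AddCon.ker_rel _).1 (edgeCon_le_ker _ (fun i j hij => ?_) h)
  ext c
  simp [xComponentDeg_apply, single_apply, ConnectedComponent.eq.2 hij.reachable]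

theorem le_xComponentDeg (γ : (V ⊕ V) →₀ ℕ) (i : V) :
    γ (Sum.inl i) ≤ xComponentDeg G γ (G.connectedComponentMk i) := by
  classical
  rw [xComponentDeg_apply]
  exact Finset.single_le_sum (f := fun j => γ (Sum.inl j)) (fun _ _ => Nat.zero_le _)
    (Finset.mem_filter.2 ⟨Finset.mem_univ i, rfl⟩)

theorem exists_of_xComponentDeg_ne_zero {γ : (V ⊕ V) →₀ ℕ} {c : G.ConnectedComponent}
    (h : xComponentDeg G γ c ≠ 0) :
    ∃ j, G.connectedComponentMk j = c ∧ γ (Sum.inl j) ≠ 0 := by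
  classical
  rw [xComponentDeg_apply] at h
  obtain ⟨j, hj, hne⟩ := Finset.exists_ne_zero_of_sum_ne_zero h
  exact ⟨j, (Finset.mem_filter.1 hj).2, hne⟩

theorem exists_edgeCon_add_expX (hfree : ∀ v, G.IsFreeVertex v) {δ : (V ⊕ V) →₀ ℕ} {i : V}
    (hx : xComponentDeg G δ (G.connectedComponentMk i) ≠ 0) (hd : vertexDeg δ i ≠ 0) :
    ∃ δ', edgeCon G δ (δ' + expX i) := by
  by_cases hxi : δ (Sum.inl i) = 0
  swap
  · obtain ⟨δ', rfl⟩ := exists_eq_add_single_one hxi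
    exact ⟨δ', (edgeCon G).refl _⟩
  obtain ⟨j, hji, hxj⟩ := exists_of_xComponentDeg_ne_zero hx
  have hij : G.Adj j i := ((ConnectedComponent.eq.1 hji).eq_or_adj_of_forall_isFreeVertex
    hfree).resolve_left (by rintro rfl; exact hxj hxi)
  obtain ⟨δ₁, rfl⟩ := exists_eq_add_single_one hxj
  obtain ⟨δ₀, rfl⟩ := exists_eq_add_single_one (w := Sum.inr i) (γ := δ₁)
    (by simpa [hxi, single_apply] using hd)
  exact ⟨δ₀ + expY j, edgeCon_of_step ⟨j, i, δ₀, hij, by abel, by abel⟩⟩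

/-- When all vertices are free, `G` is a disjoint union of cliques. -/
theorem edgeCon_of_vertexDeg_eq_of_xComponentDeg_eq (hfree : ∀ v, G.IsFreeVertex v)
    {γ δ : (V ⊕ V) →₀ ℕ} (hv : vertexDeg γ = vertexDeg δ)
    (hx : xComponentDeg G γ = xComponentDeg G δ) : edgeCon G γ δ := by
  induction hn : γ.degree using Nat.strong_induction_on generalizing γ δ with
  | _ n ih =>
  by_cases hγx : ∃ i, γ (Sum.inl i) ≠ 0
  · obtain ⟨i, hi⟩ := hγx
    obtain ⟨γ', rfl⟩ := exists_eq_add_single_one hi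
    have hxδ : xComponentDeg G δ (G.connectedComponentMk i) ≠ 0 := by
      rw [← hx]
      exact Nat.pos_iff_ne_zero.1 (lt_of_lt_of_le (by simp) (le_xComponentDeg _ i))
    have hvδ : vertexDeg δ i ≠ 0 := by rw [← hv]; simp
    obtain ⟨δ', hδ⟩ := exists_edgeCon_add_expX hfree hxδ hvδ
    have hv' : vertexDeg γ' = vertexDeg δ' := add_right_cancel (b := vertexDeg (expX i)) <| by
      rw [← map_add, ← map_add, hv, vertexDeg_eq_of_edgeCon hδ]
    have hx' : xComponentDeg G γ' = xComponentDeg G δ' :=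
      add_right_cancel (b := xComponentDeg G (expX i)) <| by
        rw [← map_add, ← map_add, hx, xComponentDeg_eq_of_edgeCon hδ]
    have hlt : γ'.degree < n := by rw [← hn, map_add, degree_single]; omega
    exact ((edgeCon G).add (ih _ hlt hv' hx' rfl) ((edgeCon G).refl _)).trans ((edgeCon G).symm hδ)
  · simp only [not_exists, not_not] at hγx
    have hδx : ∀ i, δ (Sum.inl i) = 0 := fun i => by
      have := le_xComponentDeg (G := G) δ i
      rw [← hx, xComponentDeg_apply, Finset.sum_eq_zero fun j _ => hγx j] at this
      omega
    have hγδ : γ = δ := by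
      ext (i | i)
      · rw [hγx, hδx]
      · have := congrFun hv i
        simpa only [vertexDeg_apply, hγx, hδx, zero_add] using this
    exact hγδ ▸ (edgeCon G).refl _

theorem edgeCon_add_right_cancel_of_forall_isFreeVertex (hfree : ∀ v, G.IsFreeVertex v)
    {γ δ τ : (V ⊕ V) →₀ ℕ} (h : edgeCon G (γ + τ) (δ + τ)) : edgeCon G γ δ :=
  edgeCon_of_vertexDeg_eq_of_xComponentDeg_eq hfree
    (add_right_cancel (b := vertexDeg τ) (by rw [← map_add, ← map_add, vertexDeg_eq_of_edgeCon h]))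
    (add_right_cancel (b := xComponentDeg G τ)
      (by rw [← map_add, ← map_add, xComponentDeg_eq_of_edgeCon h]))

end CompleteInvariant

/-- A move along a new edge `{i, j}` of `G.completeNeighbors v` is the composite of the two
moves along `{v, j}` and `{i, v}`, provided a variable of `v` is present to act as a catalyst. -/
theorem edgeCon_of_edgeCon_completeNeighbors {v : V} {γ δ : (V ⊕ V) →₀ ℕ}
    (h : edgeCon (G.completeNeighbors v) γ δ) (hγ : vertexDeg γ v ≠ 0) : edgeCon G γ δ := by
  refine edgeCon_of_reflTransGen (fun γ => vertexDeg γ v ≠ 0)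
    (fun γ δ hs => (vertexDeg_eq_of_edgeCon (edgeCon_of_step hs) ▸ ·)) ?_ h hγ
  rintro _ _ ⟨i, j, γ₀, hij | ⟨-, hvi, hvj⟩, rfl, rfl⟩ hγ
  · exact edgeCon_of_step ⟨i, j, γ₀, hij, rfl, rfl⟩
  have hγ₀ : γ₀ (Sum.inl v) + γ₀ (Sum.inr v) ≠ 0 := by
    classical
    simpa [vertexDeg_add_expX_add_expY_apply, hvi.ne', hvj.ne'] using hγ
  by_cases hx : γ₀ (Sum.inl v) = 0
  · obtain ⟨γ₁, rfl⟩ := exists_eq_add_single_one (γ := γ₀) (w := Sum.inr v) (by omega)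
    exact (edgeCon G).trans (edgeCon_of_step ⟨i, v, γ₁ + expY j, hvi.symm, by abel, rfl⟩)
      (edgeCon_of_step ⟨v, j, γ₁ + expY i, hvj, by abel, by abel⟩)
  · obtain ⟨γ₁, rfl⟩ := exists_eq_add_single_one hx
    exact (edgeCon G).trans (edgeCon_of_step ⟨v, j, γ₁ + expX i, hvj, by abel, rfl⟩)
      (edgeCon_of_step ⟨i, v, γ₁ + expX j, hvi.symm, by abel, by abel⟩)

theorem edgeCon_deleteIncidenceSet_of_edgeCon {v : V} {γ δ : (V ⊕ V) →₀ ℕ}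
    (h : edgeCon G γ δ) (hγ : vertexDeg γ v = 0) : edgeCon (G.deleteIncidenceSet v) γ δ := by
  refine edgeCon_of_reflTransGen (fun γ => vertexDeg γ v = 0)
    (fun γ δ hs => (vertexDeg_eq_of_edgeCon (edgeCon_of_step hs) ▸ ·)) ?_ h hγ
  rintro _ _ ⟨i, j, γ₀, hij, rfl, rfl⟩ hγ
  classical
  rw [vertexDeg_add_expX_add_expY_apply] at hγ
  refine edgeCon_of_step ⟨i, j, γ₀, deleteIncidenceSet_adj.2 ⟨hij, ?_, ?_⟩, rfl, rfl⟩ <;>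
    rintro rfl <;> simp at hγ

/-- Induction on `G`: a non-free vertex `w` either carries a variable of `γ`, and then the
congruence for the larger graph `G.completeNeighbors w` descends to `G`, or it carries none, and
then no move touches `w`. -/
theorem edgeCon_add_expX_cancel [Finite V] {G : SimpleGraph V} {v : V} (hv : G.IsFreeVertex v)
    {γ δ : (V ⊕ V) →₀ ℕ} (h : edgeCon G (γ + expX v) (δ + expX v)) : edgeCon G γ δ := by
  have := Fintype.ofFinite V
  by_cases hall : ∀ w, G.IsFreeVertex w
  · exact edgeCon_add_right_cancel_of_forall_isFreeVertex hall h
  obtain ⟨w, hw⟩ := not_forall.1 hall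
  have hvw : v ≠ w := fun hvw => hw (hvw ▸ hv)
  by_cases hγ : vertexDeg γ w = 0
  · have hγv : vertexDeg (γ + expX v) w = 0 := by
      simpa [hvw, single_apply] using hγ
    exact edgeCon_mono (G.deleteIncidenceSet_le w) (edgeCon_add_expX_cancel
      (hv.deleteIncidenceSet w) (edgeCon_deleteIncidenceSet_of_edgeCon h hγv))
  · exact edgeCon_of_edgeCon_completeNeighbors (edgeCon_add_expX_cancel
      (hv.completeNeighbors w) (edgeCon_mono (G.le_completeNeighbors w) h)) hγ
termination_by (G.support.ncard, Gᶜ.edgeSet.ncard)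
decreasing_by
  · exact Prod.Lex.left _ _ (Set.ncard_lt_ncard
      (support_deleteIncidenceSet_ssubset (mem_support_of_not_isFreeVertex hw)) (Set.toFinite _))
  · rw [support_completeNeighbors]
    exact Prod.Lex.right _ (Set.ncard_lt_ncard
      (edgeSet_strict_mono (compl_lt_compl_iff_lt.2 (lt_completeNeighbors hw))) (Set.toFinite _))

section Ideal

noncomputable def edgeHom (K : Type*) [CommRing K] (G : SimpleGraph V) :
    MvPolynomial (V ⊕ V) K →+* AddMonoidAlgebra K (edgeCon G).Quotient :=
  AddMonoidAlgebra.mapDomainRingHom K (edgeCon G).mk'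

variable {K : Type*} [CommRing K]

theorem edgeHom_monomial (γ : (V ⊕ V) →₀ ℕ) (c : K) :
    edgeHom K G (monomial γ c) = AddMonoidAlgebra.single ((edgeCon G).mk' γ) c :=
  AddMonoidAlgebra.mapDomain_single

theorem monomial_sub_monomial_mem {γ δ : (V ⊕ V) →₀ ℕ} (h : edgeCon G γ δ) :
    (monomial γ 1 - monomial δ 1 : MvPolynomial (V ⊕ V) K) ∈ binomialEdgeIdeal K G := by
  induction h with
  | refl => simp
  | tail _ hs ih =>
    obtain ⟨i, j, γ₀, hij, rfl, rfl⟩ := hs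
    have hgen : monomial γ₀ 1 * (X (Sum.inl i) * X (Sum.inr j) - X (Sum.inl j) * X (Sum.inr i)) ∈
        binomialEdgeIdeal K G :=
      Ideal.mul_mem_left _ _ (Ideal.subset_span ⟨i, j, hij, rfl⟩)
    convert add_mem ih hgen using 1
    simp only [X, monomial_mul, mul_one, mul_sub, add_assoc]
    abel

theorem mem_binomialEdgeIdeal_iff {p : MvPolynomial (V ⊕ V) K} :
    p ∈ binomialEdgeIdeal K G ↔ edgeHom K G p = 0 := by
  refine ⟨fun hp => ?_, fun hp => AddMonoidAlgebra.mem_of_mapDomain_mk'_eq_zero (edgeCon G)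
    (fun _ _ h => monomial_sub_monomial_mem h) hp⟩
  refine (Ideal.span_le (I := RingHom.ker (edgeHom K G))).2 ?_ hp
  rintro _ ⟨i, j, hij, rfl⟩
  simp only [SetLike.mem_coe, RingHom.mem_ker, map_sub, X, monomial_mul, mul_one, edgeHom_monomial]
  rw [(edgeCon G).mk'_eq_mk'_iff.2 (edgeCon_of_step (γ := expX i + expY j) (δ := expX j + expY i)
    ⟨i, j, 0, hij, by simp, by simp⟩), sub_self]

theorem isAddLeftRegular_mk'_expX [Finite V] {v : V} (hv : G.IsFreeVertex v) :
    IsAddLeftRegular ((edgeCon G).mk' (expX v)) := by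
  intro q r h
  obtain ⟨γ, rfl⟩ := (edgeCon G).mk'_surjective q
  obtain ⟨δ, rfl⟩ := (edgeCon G).mk'_surjective r
  simp only [← map_add] at h
  refine (edgeCon G).mk'_eq_mk'_iff.2 (edgeCon_add_expX_cancel hv ?_)
  rw [add_comm γ, add_comm δ]
  exact (edgeCon G).mk'_eq_mk'_iff.1 h

/-- Multiplication by `x_v - x_w` is injective modulo `J_G`: with respect to the grading by the
degree at `v`, its leading form is `x_v`. -/
theorem mem_of_X_sub_X_mul_mem [Finite V] {v w : V} (hv : G.IsFreeVertex v) (hwv : w ≠ v)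
    {g : MvPolynomial (V ⊕ V) K}
    (hg : (X (Sum.inl v) - X (Sum.inl w)) * g ∈ binomialEdgeIdeal K G) :
    g ∈ binomialEdgeIdeal K G := by
  rw [mem_binomialEdgeIdeal_iff] at hg ⊢
  rw [map_mul, map_sub, sub_mul, sub_eq_zero, X, X, edgeHom_monomial, edgeHom_monomial] at hg
  let W := (edgeCon G).lift ((Pi.evalAddMonoidHom (fun _ => ℕ) v).comp vertexDeg)
    fun _ _ h => (AddCon.ker_rel _).2 (congrFun (vertexDeg_eq_of_edgeCon h) v)
  refine AddMonoidAlgebra.eq_zero_of_single_mul_eq_single_mul (isAddLeftRegular_mk'_expX hv) W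
    ?_ hg
  simp [W, hwv]

end Ideal

end BinomialEdgeIdeal

theorem x_diff_notMem_minimalPrimes_and_nonZeroDivisor_general
    {n m : ℕ} (K : Type*) [Field K]
    (G₁ : SimpleGraph (Fin (n + 1))) (G₂ : SimpleGraph (Fin (m + 1)))
    (h₁ : G₁.IsFreeVertex (Fin.last n)) :
    (∀ P ∈ (binomialEdgeIdeal K (G₁.sum G₂)).minimalPrimes,
        X (Sum.inl (Sum.inl (Fin.last n))) - X (Sum.inl (Sum.inr (Fin.last m))) ∉ P) ∧
    Ideal.Quotient.mk (binomialEdgeIdeal K (G₁.sum G₂))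
        (X (Sum.inl (Sum.inl (Fin.last n))) - X (Sum.inl (Sum.inr (Fin.last m)))) ∈
      nonZeroDivisors
        (MvPolynomial ((Fin (n + 1) ⊕ Fin (m + 1)) ⊕ (Fin (n + 1) ⊕ Fin (m + 1))) K ⧸
          binomialEdgeIdeal K (G₁.sum G₂)) := by
  have hcolon : ∀ g, (X (Sum.inl (Sum.inl (Fin.last n))) - X (Sum.inl (Sum.inr (Fin.last m)))) *
      g ∈ binomialEdgeIdeal K (G₁.sum G₂) → g ∈ binomialEdgeIdeal K (G₁.sum G₂) :=
    fun _ => BinomialEdgeIdeal.mem_of_X_sub_X_mul_mem h₁.sum_inl Sum.inr_ne_inl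
  refine ⟨fun P hP hu => ?_, mem_nonZeroDivisors_iff_right.2 fun z hz => ?_⟩
  · obtain ⟨y, hy, huy⟩ := Ideal.exists_mul_mem_of_mem_minimalPrimes hP hu
    exact hy (hcolon y huy)
  · obtain ⟨g, rfl⟩ := Ideal.Quotient.mk_surjective z
    rw [← map_mul, Ideal.Quotient.eq_zero_iff_mem, mul_comm] at hz
    exact Ideal.Quotient.eq_zero_iff_mem.2 (hcolon g hz)

/-- With `G₁` on `{1, …, n}`, `G₂` on `{n+1, …, n+m}`, `n` free in `G₁` and `n+m` free
in `G₂`, the element `x_n - x_{n+m}` lies in no minimal prime of `J_{G'}` where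
`G' = G₁ ⊔ G₂`; in particular it is a nonzerodivisor on `S'/J_{G'}`. -/
theorem x_diff_notMem_minimalPrimes_and_nonZeroDivisor
    {n m : ℕ} (K : Type*) [Field K]
    (G₁ : SimpleGraph (Fin (n + 1))) (G₂ : SimpleGraph (Fin (m + 1)))
    (h₁ : G₁.IsFreeVertex (Fin.last n)) (h₂ : G₂.IsFreeVertex (Fin.last m)) :
    (∀ P ∈ (binomialEdgeIdeal K (G₁.sum G₂)).minimalPrimes,
        X (Sum.inl (Sum.inl (Fin.last n))) - X (Sum.inl (Sum.inr (Fin.last m))) ∉ P) ∧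
    Ideal.Quotient.mk (binomialEdgeIdeal K (G₁.sum G₂))
        (X (Sum.inl (Sum.inl (Fin.last n))) - X (Sum.inl (Sum.inr (Fin.last m)))) ∈
      nonZeroDivisors
        (MvPolynomial ((Fin (n + 1) ⊕ Fin (m + 1)) ⊕ (Fin (n + 1) ⊕ Fin (m + 1))) K ⧸
          binomialEdgeIdeal K (G₁.sum G₂)) :=
  x_diff_notMem_minimalPrimes_and_nonZeroDivisor_general K G₁ G₂ h₁
end

section
/- Let $G_1$ be a finite simple graph on vertex set $\{1,\ldots,n\}$ and $G_2$ a finite simple graph on vertex set $\{n+1,\ldots,n+m\}$, and assume that $n$ is a free vertex of $G_1$ and $n+m$ is a free vertex of $G_2$. Let $G' = G_1 \cup G_2$ be their disjoint union and $S' = K[x_1,\ldots,x_{n+m},y_1,\ldots,y_{n+m}]$. Then for every minimal prime $P$ of $J_{G'}$, the element $y_n - y_{n+m}$ does not belong to $P + (x_n - x_{n+m})$. -/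
open MvPolynomial

/-!
A minimal prime `P` of `J_G` is the ideal of an irreducible component of the variety of `J_G`,
with generic point the image `(x̄, ȳ)` of the variables in `S/P`. A polynomial curve
`t ↦ (x(t), y(t))` over `S/P` that lies in the variety and passes through `(x̄, ȳ)` gives a
homomorphism `S → (S/P)[t]` whose kernel is a prime between `J_G` and `P`, hence equal to `P`:
every element of `P` vanishes along the curve.

Three such curves prove the theorem. Scaling the two components with weights `t` and `t²`
turns `y_n - y_{n+m} ∈ P + (x_n - x_{n+m})` into `y_n - c x_n ∈ P` for a scalar `c`. The shear
`y ↦ y + t x` then gives `x_n ∈ P`, hence `y_n ∈ P`. Since `n` is free, moving the point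
`(x_n, y_n)` along `t (x_u, y_u)` for a neighbour `u` shows `x_u ∈ P` for all neighbours, and then
the translation `y_n ↦ y_n + t` shows `y_n ∉ P`.
-/

section

variable {V K : Type*} [CommRing K] {G : SimpleGraph V} {P : Ideal (MvPolynomial (V ⊕ V) K)}

local notation "x̄" i:max => Ideal.Quotient.mk P (X (Sum.inl i))
local notation "ȳ" i:max => Ideal.Quotient.mk P (X (Sum.inr i))

theorem binomialEdgeIdeal_le_ker_aeval_iff {A : Type*} [CommRing A] [Algebra K A]
    (a : V ⊕ V → A) :
    binomialEdgeIdeal K G ≤ RingHom.ker (aeval a) ↔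
      ∀ i j, G.Adj i j → a (.inl i) * a (.inr j) = a (.inl j) * a (.inr i) := by
  simp only [binomialEdgeIdeal, Ideal.span_le, Set.subset_def, Set.mem_ofPred_eq,
    SetLike.mem_coe, RingHom.mem_ker]
  constructor
  · intro h i j hij
    simpa [sub_eq_zero] using h _ ⟨i, j, hij, rfl⟩
  · rintro h _ ⟨i, j, hij, rfl⟩
    simp [h i j hij]

theorem mk_X_inl_mul_mk_X_inr_eq_of_adj (hJP : binomialEdgeIdeal K G ≤ P) {i j : V}
    (hij : G.Adj i j) : x̄ i * ȳ j = x̄ j * ȳ i := by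
  rw [← map_mul, ← map_mul, Ideal.Quotient.eq]
  exact hJP (Ideal.subset_span ⟨i, j, hij, rfl⟩)

theorem aeval_eq_zero_of_mem_minimalPrimes (hP : P ∈ (binomialEdgeIdeal K G).minimalPrimes)
    (ax ay : V → Polynomial (MvPolynomial (V ⊕ V) K ⧸ P))
    (t₀ : MvPolynomial (V ⊕ V) K ⧸ P)
    (hrel : ∀ i j, G.Adj i j → ax i * ay j = ax j * ay i)
    (hx : ∀ v, (ax v).eval t₀ = x̄ v) (hy : ∀ v, (ay v).eval t₀ = ȳ v)
    {f : MvPolynomial (V ⊕ V) K} (hf : f ∈ P) :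
    aeval (Sum.elim ax ay) f = 0 := by
  have := hP.1.1
  have heval : ∀ g, (aeval (Sum.elim ax ay) g).eval t₀ = Ideal.Quotient.mk P g := by
    intro g
    induction g using MvPolynomial.induction_on with
    | C r => simp only [aeval_C, Polynomial.algebraMap_apply, Polynomial.eval_C]; rfl
    | add p q hp hq => simp [hp, hq]
    | mul_X p s hp => rcases s with v | v <;> simp [hp, hx, hy]
  have hker : RingHom.ker (aeval (Sum.elim ax ay)) ≤ P := fun g hg => by
    rw [← Ideal.Quotient.eq_zero_iff_mem, ← heval, RingHom.mem_ker.1 hg, Polynomial.eval_zero]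
  have hJ : binomialEdgeIdeal K G ≤ RingHom.ker (aeval (Sum.elim ax ay)) :=
    (binomialEdgeIdeal_le_ker_aeval_iff (Sum.elim ax ay)).2 hrel
  exact hP.2 ⟨RingHom.ker_isPrime _, hJ⟩ hker hf

theorem aeval_line_eq_zero_of_mem_minimalPrimes (hP : P ∈ (binomialEdgeIdeal K G).minimalPrimes)
    (dx dy : V → MvPolynomial (V ⊕ V) K ⧸ P)
    (h₁ : ∀ i j, G.Adj i j → x̄ i * dy j + dx i * ȳ j = x̄ j * dy i + dx j * ȳ i)
    (h₂ : ∀ i j, G.Adj i j → dx i * dy j = dx j * dy i)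
    {f : MvPolynomial (V ⊕ V) K} (hf : f ∈ P) :
    aeval (Sum.elim (fun v => Polynomial.C (x̄ v) + Polynomial.C (dx v) * Polynomial.X)
      (fun v => Polynomial.C (ȳ v) + Polynomial.C (dy v) * Polynomial.X)) f = 0 := by
  have expand : ∀ a b c d : MvPolynomial (V ⊕ V) K ⧸ P,
      (Polynomial.C a + Polynomial.C b * Polynomial.X) *
          (Polynomial.C c + Polynomial.C d * Polynomial.X) =
        Polynomial.C (a * c) + Polynomial.C (a * d + b * c) * Polynomial.X +
          Polynomial.C (b * d) * Polynomial.X ^ 2 := by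
    intros
    simp only [map_add, map_mul]
    ring
  refine aeval_eq_zero_of_mem_minimalPrimes hP _ _ 0 (fun i j hij => ?_) (by simp) (by simp) hf
  rw [expand, expand, mk_X_inl_mul_mk_X_inr_eq_of_adj hP.1.2 hij, h₁ i j hij, h₂ i j hij]

theorem eq_zero_of_X_mem_of_mem_minimalPrimes (hP : P ∈ (binomialEdgeIdeal K G).minimalPrimes)
    (dx dy : V → MvPolynomial (V ⊕ V) K ⧸ P)
    (h₁ : ∀ i j, G.Adj i j → x̄ i * dy j + dx i * ȳ j = x̄ j * dy i + dx j * ȳ i)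
    (h₂ : ∀ i j, G.Adj i j → dx i * dy j = dx j * dy i)
    {s : V ⊕ V} (hs : X s ∈ P) : Sum.elim dx dy s = 0 := by
  have h := congrArg (Polynomial.coeff · 1)
    (aeval_line_eq_zero_of_mem_minimalPrimes hP dx dy h₁ h₂ hs)
  rcases s with v | v <;> simpa using h

theorem X_inr_sub_C_mul_X_inl_mem_of_not_reachable
    (hP : P ∈ (binomialEdgeIdeal K G).minimalPrimes) {u v : V} (huv : ¬ G.Reachable u v)
    {f : MvPolynomial (V ⊕ V) K}
    (h : X (.inr u) - X (.inr v) - f * (X (.inl u) - X (.inl v)) ∈ P) :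
    X (.inr u) - C (constantCoeff f) * X (.inl u) ∈ P := by
  classical
  have := hP.1.1
  -- Positive weights make `f` evaluate to its constant coefficient at `t = 0`; the gap between
  -- them keeps the `v`-terms vanishing there after division by `t`.
  set w : V → ℕ := fun i => if G.Reachable u i then 1 else 2
  have hw : ∀ i j, G.Adj i j → w i = w j := fun i j hij => by
    have : G.Reachable u i ↔ G.Reachable u j :=
      ⟨fun h => h.trans hij.reachable, fun h => h.trans hij.symm.reachable⟩
    simp only [w, this]
  set ax := fun i => Polynomial.X ^ w i * Polynomial.C (x̄ i)
  set ay := fun i => Polynomial.X ^ w i * Polynomial.C (ȳ i)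
  have hrel : ∀ i j, G.Adj i j → ax i * ay j = ax j * ay i := by
    intro i j hij
    have hC := congrArg Polynomial.C (mk_X_inl_mul_mk_X_inr_eq_of_adj hP.1.2 hij)
    simp only [map_mul] at hC
    simp only [ax, ay, hw i j hij]
    linear_combination (Polynomial.X ^ w j) ^ 2 * hC
  have hF : ∀ g,
      (aeval (Sum.elim ax ay) g).eval 0 = Ideal.Quotient.mk P (C (constantCoeff g)) := by
    intro g
    induction g using MvPolynomial.induction_on with
    | C r =>
      simp only [aeval_C, Polynomial.algebraMap_apply, Polynomial.eval_C, constantCoeff_C]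
      rfl
    | add p q hp hq => simp [hp, hq]
    | mul_X p s hp => rcases s with i | i <;> simp [ax, ay, w] <;> split_ifs <;> simp
  have h0 := aeval_eq_zero_of_mem_minimalPrimes hP ax ay 1 hrel (by simp [ax]) (by simp [ay]) h
  set F := aeval (Sum.elim ax ay) f
  simp only [map_sub, map_mul, aeval_X, Sum.elim_inl, Sum.elim_inr, ax, ay, w,
    if_pos (SimpleGraph.Reachable.refl u), if_neg huv] at h0
  have h1 : Polynomial.X * (Polynomial.C (ȳ u) - Polynomial.X * Polynomial.C (ȳ v) -
      F * (Polynomial.C (x̄ u) - Polynomial.X * Polynomial.C (x̄ v))) = 0 := by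
    linear_combination h0
  have h2 := congrArg (Polynomial.eval 0) ((mul_eq_zero.1 h1).resolve_left Polynomial.X_ne_zero)
  simp only [Polynomial.eval_sub, Polynomial.eval_mul, Polynomial.eval_C, Polynomial.eval_X, hF,
    F] at h2
  rw [← Ideal.Quotient.eq_zero_iff_mem]
  simpa using h2

theorem X_inl_mem_of_X_inr_sub_C_mul_X_inl_mem (hP : P ∈ (binomialEdgeIdeal K G).minimalPrimes)
    {v : V} {c : K} (h : X (.inr v) - C c * X (.inl v) ∈ P) : X (.inl v) ∈ P := by
  have hline := aeval_line_eq_zero_of_mem_minimalPrimes hP 0 (fun w => x̄ w)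
    (fun _ _ _ => by simp [mul_comm]) (fun _ _ _ => by simp) h
  simpa [Ideal.Quotient.eq_zero_iff_mem] using congrArg (Polynomial.coeff · 1) hline

theorem X_inr_notMem_of_forall_adj_X_inl_mem (hP : P ∈ (binomialEdgeIdeal K G).minimalPrimes)
    {v : V} (hN : ∀ u, G.Adj v u → X (.inl u) ∈ P) : X (.inr v) ∉ P := by
  classical
  have := hP.1.1
  set dy : V → MvPolynomial (V ⊕ V) K ⧸ P := Pi.single v 1
  have hvanish : ∀ i j, G.Adj i j → x̄ i * dy j = 0 := by
    intro i j hij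
    by_cases hj : j = v
    · subst hj
      simp [Ideal.Quotient.eq_zero_iff_mem.2 (hN i hij.symm)]
    · simp [dy, hj]
  intro hy
  have h := eq_zero_of_X_mem_of_mem_minimalPrimes hP 0 dy
    (fun i j hij => by simp [hvanish i j hij, hvanish j i hij.symm]) (fun _ _ _ => by simp) hy
  simp [dy] at h

theorem X_inl_mem_of_adj_of_isFreeVertex (hP : P ∈ (binomialEdgeIdeal K G).minimalPrimes)
    {u v : V} (hv : G.IsFreeVertex v) (hvu : G.Adj v u) (hx : X (.inl v) ∈ P) :
    X (.inl u) ∈ P := by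
  classical
  set dx : V → MvPolynomial (V ⊕ V) K ⧸ P := Pi.single v (x̄ u)
  set dy : V → MvPolynomial (V ⊕ V) K ⧸ P := Pi.single v (ȳ u)
  have hu : ∀ j, G.Adj v j → x̄ u * ȳ j = x̄ j * ȳ u := by
    intro j hvj
    rcases eq_or_ne u j with rfl | huj
    · rfl
    · exact mk_X_inl_mul_mk_X_inr_eq_of_adj hP.1.2 (hv u j hvu hvj huj)
  have h₁ : ∀ i j, G.Adj i j → x̄ i * dy j + dx i * ȳ j = x̄ j * dy i + dx j * ȳ i := by
    intro i j hij
    by_cases hi : i = v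
    · subst hi
      simp [dx, dy, hij.ne', hu j hij]
    by_cases hj : j = v
    · subst hj
      simp [dx, dy, hi, (hu i hij.symm).symm]
    · simp [dx, dy, hi, hj]
  have h₂ : ∀ i j, G.Adj i j → dx i * dy j = dx j * dy i := by
    intro i j hij
    by_cases hi : i = v
    · subst hi
      simp [dx, dy, hij.ne']
    · by_cases hj : j = v <;> simp [dx, dy, hi, hj]
  have h := eq_zero_of_X_mem_of_mem_minimalPrimes hP dx dy h₁ h₂ hx
  simpa [dx, Ideal.Quotient.eq_zero_iff_mem] using h

end

theorem SimpleGraph.IsFreeVertex.sum_inl_s5 {V W : Type*} {G : SimpleGraph V} {v : V}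
    (hv : G.IsFreeVertex v) (H : SimpleGraph W) : (G ⊕g H).IsFreeVertex (.inl v) := by
  rintro (u | u) (w | w) hu hw hne
  · exact hv u w hu hw (fun h => hne (congrArg Sum.inl h))
  all_goals simp_all

theorem y_diff_notMem_minimalPrime_add_x_diff_general
    {n m : ℕ} (K : Type*) [Field K]
    (G₁ : SimpleGraph (Fin (n + 1))) (G₂ : SimpleGraph (Fin (m + 1)))
    (h₁ : G₁.IsFreeVertex (Fin.last n)) :
    ∀ P ∈ (binomialEdgeIdeal K (G₁.sum G₂)).minimalPrimes,
      X (Sum.inr (Sum.inl (Fin.last n))) - X (Sum.inr (Sum.inr (Fin.last m))) ∉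
        P + Ideal.span {X (Sum.inl (Sum.inl (Fin.last n))) -
          X (Sum.inl (Sum.inr (Fin.last m)))} := by
  intro P hP hmem
  rw [Submodule.add_eq_sup, sup_comm, Ideal.mem_span_singleton_sup] at hmem
  obtain ⟨f, p, hp, hfp⟩ := hmem
  have hy := X_inr_sub_C_mul_X_inl_mem_of_not_reachable hP
    (SimpleGraph.not_reachable_sum_inl_inr _ _) (f := f) (by rwa [← hfp, add_sub_cancel_left])
  have hx := X_inl_mem_of_X_inr_sub_C_mul_X_inl_mem hP hy
  have hN : ∀ u, (G₁ ⊕g G₂).Adj (.inl (Fin.last n)) u → X (.inl u) ∈ P := fun u hu =>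
    X_inl_mem_of_adj_of_isFreeVertex hP (h₁.sum_inl_s5 G₂) hu hx
  exact X_inr_notMem_of_forall_adj_X_inl_mem hP hN
    (by simpa using Ideal.add_mem _ hy (Ideal.mul_mem_left _ (C (constantCoeff f)) hx))

/-- With `G₁` on `{1, …, n}`, `G₂` on `{n+1, …, n+m}`, `n` free in `G₁` and `n+m` free
in `G₂`, for every minimal prime `P` of `J_{G'}` the element `y_n - y_{n+m}` does not
belong to `P + (x_n - x_{n+m})`, where `G' = G₁ ⊔ G₂`. -/
theorem y_diff_notMem_minimalPrime_add_x_diff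
    {n m : ℕ} (K : Type*) [Field K]
    (G₁ : SimpleGraph (Fin (n + 1))) (G₂ : SimpleGraph (Fin (m + 1)))
    (h₁ : G₁.IsFreeVertex (Fin.last n)) (h₂ : G₂.IsFreeVertex (Fin.last m)) :
    ∀ P ∈ (binomialEdgeIdeal K (G₁.sum G₂)).minimalPrimes,
      X (Sum.inr (Sum.inl (Fin.last n))) - X (Sum.inr (Sum.inr (Fin.last m))) ∉
        P + Ideal.span {X (Sum.inl (Sum.inl (Fin.last n))) -
          X (Sum.inl (Sum.inr (Fin.last m)))} :=
  y_diff_notMem_minimalPrime_add_x_diff_general K G₁ G₂ h₁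
end
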